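/- arXiv:2005.07687 — 7 statements merged into one kernel-verified Lean document; each statement's English description precedes it below -/
import Mathlib

section
/- Let N be a finite group, let α be an automorphism of N, and let t ∈ N. If the set {n ∈ N : n·(n^α) = t} has cardinality strictly greater than 3|N|/4, then N is abelian, t = 1, and n^α = n^{-1} for all n ∈ N. -/
/-!
Fix a solution `s` of `s * α s = t`. Left multiplication by `s⁻¹` sends every solution `n` to an
element inverted by the automorphism `x ↦ α s * α x * (α s)⁻¹`, so this automorphism inverts more
than `3/4` of `N`, and the Liebeck–MacHale theorem applies: `N` is abelian, hence the conjugation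
is trivial and `α` itself inverts everything, which forces `t = s * s⁻¹ = 1`.

Liebeck–MacHale: if `f` inverts `a`, `b` and `a * b`, then `a` and `b` commute. For `a` in the
set `I` of inverted elements, `I ∩ a⁻¹ • I` has more than half the elements and lies in the
centralizer of `a`, so `I` lies in the center, which is therefore everything. In an abelian group
`I` is a subgroup, so it is everything as well.
-/

open Finset Pointwise

theorem Subgroup.eq_top_of_card_lt_two_mul {G : Type*} [Group G] [Fintype G] (H : Subgroup G)
    {s : Finset G} (hs : ∀ x ∈ s, x ∈ H) (h : Fintype.card G < 2 * #s) : H = ⊤ := by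
  have hsH : #s ≤ Nat.card H :=
    calc #s = (s : Set G).ncard := (Set.ncard_coe_finset s).symm
      _ ≤ (H : Set G).ncard := Set.ncard_le_ncard hs
      _ = Nat.card H := (Nat.card_coe_set_eq _).symm
  refine H.eq_top_of_card_eq (Nat.eq_of_dvd_of_lt_two_mul ?_ H.card_subgroup_dvd_card ?_).symm
  · exact Nat.card_ne_zero.mpr ⟨inferInstance, inferInstance⟩
  · rw [Nat.card_eq_fintype_card]; omega

theorem Finset.card_lt_two_mul_card_inter {α : Type*} [Fintype α] [DecidableEq α]
    {s t : Finset α} (hs : 3 * Fintype.card α < 4 * #s) (ht : 3 * Fintype.card α < 4 * #t) :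
    Fintype.card α < 2 * #(s ∩ t) := by
  have := card_inter_add_card_union s t
  have := card_le_univ (s ∪ t)
  omega

section Inverted

variable {G F : Type*} [Group G] [FunLike F G G] [MonoidHomClass F G G]

theorem commute_of_map_eq_inv {f : F} {a b : G} (ha : f a = a⁻¹) (hb : f b = b⁻¹)
    (hab : f (a * b) = (a * b)⁻¹) : Commute a b := by
  rw [map_mul, ha, hb, ← mul_inv_rev, inv_inj] at hab
  exact hab.symm

def invertedSubgroup (f : F) (hG : ∀ a b : G, a * b = b * a) : Subgroup G where
  carrier := {x | f x = x⁻¹}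
  one_mem' := by simp
  mul_mem' {x y} hx hy := by
    simp only [Set.mem_ofPred_eq, map_mul, mul_inv_rev] at *
    rw [hx, hy, hG]
  inv_mem' {x} hx := by
    simp only [Set.mem_ofPred_eq, map_inv, inv_inj] at *
    exact hx

variable [Fintype G] [DecidableEq G]

def invertedFinset (f : F) : Finset G := {x | f x = x⁻¹}

theorem mem_center_of_mem_invertedFinset {f : F}
    (h : 3 * Fintype.card G < 4 * #(invertedFinset f)) {a : G} (ha : a ∈ invertedFinset f) :
    a ∈ Subgroup.center G := by
  set I := invertedFinset f
  have hI : ∀ {x}, x ∈ I ↔ f x = x⁻¹ := by simp [I, invertedFinset]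
  have hcent : Subgroup.centralizer {a} = ⊤ := by
    refine (Subgroup.centralizer {a}).eq_top_of_card_lt_two_mul (s := I ∩ a⁻¹ • I) ?_ ?_
    · intro x hx
      rw [mem_inter, mem_inv_smul_finset_iff, smul_eq_mul] at hx
      rw [Subgroup.mem_centralizer_singleton_iff]
      exact (commute_of_map_eq_inv (hI.mp ha) (hI.mp hx.1) (hI.mp hx.2)).symm
    · exact card_lt_two_mul_card_inter h (by rwa [card_smul_finset])
  exact Subgroup.centralizer_eq_top_iff_subset.mp hcent rfl

/-- Liebeck–MacHale. -/
theorem forall_mul_comm_and_map_eq_inv_of_card_invertedFinset {f : F}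
    (h : 3 * Fintype.card G < 4 * #(invertedFinset f)) :
    (∀ a b : G, a * b = b * a) ∧ ∀ x : G, f x = x⁻¹ := by
  have hZ : Subgroup.center G = ⊤ :=
    (Subgroup.center G).eq_top_of_card_lt_two_mul
      (fun _ hx => mem_center_of_mem_invertedFinset h hx) (by omega)
  have hG : ∀ a b : G, a * b = b * a := fun a b =>
    ((Subgroup.mem_center_iff.mp (hZ ▸ Subgroup.mem_top a)) b).symm
  have hK : invertedSubgroup f hG = ⊤ :=
    (invertedSubgroup f hG).eq_top_of_card_lt_two_mul (s := invertedFinset f)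
      (fun _ hx => (mem_filter.mp hx).2) (by omega)
  exact ⟨hG, fun x => (hK ▸ Subgroup.mem_top x : x ∈ invertedSubgroup f hG)⟩

end Inverted

theorem card_filter_mul_map_eq_le_card_invertedFinset {N : Type*} [Group N] [Fintype N]
    [DecidableEq N] (α : MulAut N) {s t : N} (hs : s * α s = t) :
    #{n | n * α n = t} ≤ #(invertedFinset (α.trans (MulAut.conj (α s)))) := by
  refine card_le_card_of_injOn (s⁻¹ * ·) (fun n hn => ?_) (mul_right_injective s⁻¹).injOn
  have hn : α n = n⁻¹ * t := by
    rw [← (mem_filter.mp hn).2, inv_mul_cancel_left]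
  have hs' : α s = s⁻¹ * t := by rw [← hs, inv_mul_cancel_left]
  rw [mem_coe, invertedFinset, mem_filter]
  refine ⟨mem_univ _, ?_⟩
  show α s * α (s⁻¹ * n) * (α s)⁻¹ = (s⁻¹ * n)⁻¹
  rw [map_mul, map_inv, hn, hs']
  group

theorem stmt3 {N : Type*} [Group N] [Fintype N] [DecidableEq N]
    (α : MulAut N) (t : N)
    (h : 3 * Fintype.card N < 4 * (Finset.univ.filter (fun n : N => n * α n = t)).card) :
    (∀ a b : N, a * b = b * a) ∧ t = 1 ∧ ∀ n : N, α n = n⁻¹ := by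
  obtain ⟨s, hs⟩ : ∃ s, s * α s = t := by
    obtain ⟨s, hs⟩ := card_pos.mp (by omega : 0 < #{n | n * α n = t})
    exact ⟨s, (mem_filter.mp hs).2⟩
  obtain ⟨hG, hβ⟩ := forall_mul_comm_and_map_eq_inv_of_card_invertedFinset
    (h.trans_le (Nat.mul_le_mul_left 4 (card_filter_mul_map_eq_le_card_invertedFinset α hs)))
  have hα : ∀ n, α n = n⁻¹ := fun n => by
    simpa [MulAut.conj_apply, hG (α s), mul_inv_cancel_right] using hβ n
  exact ⟨hG, by rw [← hs, hα, mul_inv_cancel], hα⟩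
end

section
/- Let N be a finite group, α an automorphism of N, and t ∈ N with t ≠ 1 and with {n ∈ N : n·(n^α) = t} of cardinality greater than 3|N|/4. Then t is a central element of N of order 2 and t^α = t. -/
/-!
Two subsets of `N` with more than `|N|/2` elements meet. For `S` and `α⁻¹ S` this gives `n` with
`n * α n = t = α n * α (α n)`, hence `α t = t`. For `S` and `S t⁻¹` it shows that more than half of
the elements of `N` conjugate `t` to `t⁻¹`; these form a coset of the centralizer of `t`, which is
therefore all of `N`, so `t` is central and `t = t⁻¹`.
-/

open Finset

theorem Subgroup.eq_top_of_card_lt_two_mul_s5 {G : Type*} [Group G] [Finite G] {H : Subgroup G}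
    (h : Nat.card G < 2 * Nat.card H) : H = ⊤ := by
  rw [← Subgroup.index_eq_one]
  have hmul := H.card_mul_index
  have hne : H.index ≠ 0 := Subgroup.index_ne_zero_of_finite
  by_contra hH
  have : 2 ≤ H.index := by omega
  nlinarith

theorem Finset.card_filter_comp_equiv {α : Type*} [Fintype α] (e : α ≃ α) (p : α → Prop)
    [DecidablePred p] : #(univ.filter (p ∘ e)) = #(univ.filter p) := by
  rw [← card_map e.toEmbedding, ← Equiv.coe_toEmbedding, ← filter_map, map_univ_equiv]

theorem Finset.two_mul_card_filter_le_card_filter_and_comp_equiv {α : Type*} [Fintype α]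
    (e : α ≃ α) (p : α → Prop) [DecidablePred p] :
    2 * #(univ.filter p) ≤ Fintype.card α + #(univ.filter fun x => p x ∧ p (e x)) := by
  classical
  have hunion := card_union_add_card_inter (univ.filter p) (univ.filter (p ∘ e))
  have hle := card_le_univ (univ.filter p ∪ univ.filter (p ∘ e))
  have hcomp := card_filter_comp_equiv e p
  rw [filter_and]
  change _ ≤ _ + #(univ.filter p ∩ univ.filter (p ∘ e))
  omega

theorem Finset.exists_and_comp_equiv_of_card_lt {α : Type*} [Fintype α] (e : α ≃ α)
    (p : α → Prop) [DecidablePred p] (h : Fintype.card α < 2 * #(univ.filter p)) :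
    ∃ x, p x ∧ p (e x) := by
  have := two_mul_card_filter_le_card_filter_and_comp_equiv e p
  obtain ⟨x, hx⟩ := card_pos.mp (show 0 < #(univ.filter fun x => p x ∧ p (e x)) by omega)
  exact ⟨x, (mem_filter.mp hx).2⟩

theorem mem_center_and_inv_eq_self_of_card_lt_two_mul {G : Type*} [Group G] [Fintype G] [DecidableEq G]
    {t : G} (h : Fintype.card G < 2 * #(univ.filter fun g => g * t * g⁻¹ = t⁻¹)) :
    t ∈ Subgroup.center G ∧ t⁻¹ = t := by
  classical
  obtain ⟨x, hx⟩ : (univ.filter fun g => g * t * g⁻¹ = t⁻¹).Nonempty :=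
    card_pos.mp (by omega)
  simp only [mem_filter, mem_univ, true_and] at hx
  set H := Subgroup.centralizer ({t} : Set G)
  -- the elements inverting `t` form the coset `x * H`
  have hcard : #(univ.filter fun g => g * t * g⁻¹ = t⁻¹) ≤ Nat.card H := by
    rw [← SetLike.coe_sort_coe, Nat.card_eq_card_toFinset]
    refine card_le_card_of_injOn (x⁻¹ * ·) (fun g hg => ?_) (mul_right_injective _).injOn
    simp only [coe_filter, mem_univ, true_and, Set.mem_ofPred_eq] at hg
    simp only [Set.coe_toFinset, SetLike.mem_coe, H, Subgroup.mem_centralizer_singleton_iff]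
    rw [mul_assoc, (by rw [hx, ← hg]; group : g * t = x * t * x⁻¹ * g)]
    group
  have hH : H = ⊤ := Subgroup.eq_top_of_card_lt_two_mul_s5 (by rw [Nat.card_eq_fintype_card]; omega)
  have hcomm : ∀ g : G, g * t = t * g := fun g =>
    Subgroup.mem_centralizer_singleton_iff.mp (hH ▸ Subgroup.mem_top g : g ∈ H)
  refine ⟨Subgroup.mem_center_iff.mpr hcomm, ?_⟩
  rw [← hx, hcomm x]
  group

theorem map_eq_self_of_mul_map_eq {N : Type*} [Group N] {α : MulAut N} {n t : N}
    (hn : n * α n = t) (hαn : α n * α (α n) = t) : α t = t := by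
  rw [← hn, map_mul, hαn, hn]

theorem conj_eq_inv_of_mul_map_eq {N : Type*} [Group N] {α : MulAut N} {n t : N}
    (hαt : α t = t) (hn : n * α n = t) (hnt : n * t * α (n * t) = t) : n * t * n⁻¹ = t⁻¹ := by
  have hαn : α n = n⁻¹ * t := eq_inv_mul_of_mul_eq hn
  rw [map_mul, hαt, hαn] at hnt
  calc n * t * n⁻¹ = n * t * (n⁻¹ * t * t) * t⁻¹ * t⁻¹ := by group
    _ = t⁻¹ := by rw [hnt]; group

theorem stmt5 {N : Type*} [Group N] [Fintype N] [DecidableEq N]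
    (α : MulAut N) (t : N) (ht : t ≠ 1)
    (h : 3 * Fintype.card N < 4 * (Finset.univ.filter (fun n : N => n * α n = t)).card) :
    t ∈ Subgroup.center N ∧ orderOf t = 2 ∧ α t = t := by
  have hαt : α t = t := by
    obtain ⟨n, hn, hαn⟩ :=
      exists_and_comp_equiv_of_card_lt (α : N ≃ N) (fun n => n * α n = t) (by omega)
    exact map_eq_self_of_mul_map_eq hn hαn
  have hinv : Fintype.card N < 2 * #(univ.filter fun g => g * t * g⁻¹ = t⁻¹) := by
    have hsub : (univ.filter fun n => n * α n = t ∧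
        Equiv.mulRight t n * α (Equiv.mulRight t n) = t) ⊆
        univ.filter fun g => g * t * g⁻¹ = t⁻¹ := fun n hn => by
      simp only [mem_filter, mem_univ, true_and] at hn ⊢
      exact conj_eq_inv_of_mul_map_eq hαt hn.1 hn.2
    have := two_mul_card_filter_le_card_filter_and_comp_equiv (Equiv.mulRight t)
      (fun n => n * α n = t)
    have := card_le_card hsub
    omega
  obtain ⟨hcenter, htinv⟩ := mem_center_and_inv_eq_self_of_card_lt_two_mul hinv
  refine ⟨hcenter, orderOf_eq_prime ?_ ht, hαt⟩
  rw [pow_two, ← mul_inv_cancel t, htinv]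
end

section
/- Let X be a finite set and let f, g be permutations of X. Then either (1) the number of subsets S ⊆ X with |S ∩ S^f| = |S ∩ S^g| is at most (3/4)·2^{|X|}, or (2) there exists a subset I ⊆ X such that I is invariant under both f and g, f restricted to I equals g restricted to I, and f restricted to X∖I equals g^{-1} restricted to X∖I. -/
/-!
Let `δ_S` be the indicator vector of `S` and `A = F - G`, so that
`|S ∩ S^f| - |S ∩ S^g| = δ_S ⬝ A δ_S`. If `A + Aᵀ` has a nonzero entry at `(x, y)` with `x ≠ y`,
this entry is the second difference of the quadratic form in the directions `x, y`, so for every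
`T` avoiding `x, y` one of `T, T ∪ {x}, T ∪ {y}, T ∪ {x, y}` is not a zero of the form: at most
`3/4` of all subsets are zeros. If `A + Aᵀ` is diagonal but nonzero at `(x, x)`, the first
difference in the direction `x` is the constant `A x x ≠ 0`, and at most half of the subsets are
zeros. Finally, `A + Aᵀ = 0` says `F + F⁻¹ = G + G⁻¹`, i.e. `{f x, f⁻¹ x} = {g x, g⁻¹ x}` for every
`x`, and then `I = {x | f x = g x}` is invariant.
-/

open Finset Matrix Equiv

section

variable {X : Type*}

section Counting

variable [Fintype X] [DecidableEq X] {P : Finset X → Prop} [DecidablePred P]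

theorem two_pow_card_sub_card_le_card_filter_not (D : Finset X)
    (h : ∀ T, Disjoint T D → ∃ U ⊆ D, ¬P (T ∪ U)) :
    2 ^ (Fintype.card X - #D) ≤ #(univ.filter fun S => ¬P S) := by
  have hsurj : Set.SurjOn (· \ D) ↑(univ.filter fun S => ¬P S) ↑(univ \ D).powerset := by
    intro T hT
    rw [mem_coe, mem_powerset, subset_sdiff] at hT
    obtain ⟨U, hUD, hPU⟩ := h T hT.2
    refine ⟨T ∪ U, by simpa using hPU, ?_⟩
    simp [union_sdiff_distrib, hT.2.sdiff_eq_left, sdiff_eq_empty_iff_subset.2 hUD]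
  simpa [card_sdiff_of_subset] using card_le_card_of_surjOn _ hsurj

theorem four_mul_card_filter_le (D : Finset X) (hD : #D ≤ 2)
    (h : ∀ T, Disjoint T D → ∃ U ⊆ D, ¬P (T ∪ U)) :
    4 * #(univ.filter P) ≤ 3 * 2 ^ Fintype.card X := by
  have hnot := two_pow_card_sub_card_le_card_filter_not D h
  have htotal := card_filter_add_card_filter_not (s := (univ : Finset (Finset X))) (p := P)
  rw [card_univ, Fintype.card_finset] at htotal
  have hsplit : 2 ^ Fintype.card X = 2 ^ (Fintype.card X - #D) * 2 ^ #D := by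
    rw [← pow_add, Nat.sub_add_cancel (card_le_univ D)]
  have hD4 : 2 ^ #D ≤ 4 := pow_le_pow_right₀ (by norm_num) hD
  nlinarith [Nat.mul_le_mul_left (2 ^ (Fintype.card X - #D)) hD4]

end Counting

section QuadraticForm

variable [Fintype X] {R : Type*} [CommRing R]

theorem dotProduct_mulVec_add_single [DecidableEq X] (A : Matrix X X R) (v : X → R) (x : X) :
    (v + Pi.single x 1) ⬝ᵥ A *ᵥ (v + Pi.single x 1) =
      v ⬝ᵥ A *ᵥ v + A x x + ∑ u, v u * (A u x + A x u) := by
  simp only [add_dotProduct, dotProduct_add, mulVec_add, single_one_dotProduct, mulVec_single_one,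
    mul_add, sum_add_distrib]
  simp only [dotProduct, mulVec, col_apply, mul_comm (v _)]
  ring

theorem dotProduct_mulVec_add_add (A : Matrix X X R) (v a b : X → R) :
    (v + a + b) ⬝ᵥ A *ᵥ (v + a + b) - (v + a) ⬝ᵥ A *ᵥ (v + a) - (v + b) ⬝ᵥ A *ᵥ (v + b)
      + v ⬝ᵥ A *ᵥ v = a ⬝ᵥ A *ᵥ b + b ⬝ᵥ A *ᵥ a := by
  simp only [add_dotProduct, dotProduct_add, mulVec_add]
  ring

end QuadraticForm

section Indicator

variable [DecidableEq X] (R : Type*) [AddMonoidWithOne R]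

def indicatorVec (S : Finset X) : X → R := fun x => if x ∈ S then 1 else 0

variable {R}

@[simp]
theorem indicatorVec_empty : indicatorVec R (∅ : Finset X) = 0 := by
  ext; simp [indicatorVec]

@[simp]
theorem indicatorVec_singleton (x : X) : indicatorVec R {x} = Pi.single x 1 := by
  ext y; simp [indicatorVec, Pi.single_apply]

theorem indicatorVec_union {S T : Finset X} (h : Disjoint S T) :
    indicatorVec R (S ∪ T) = indicatorVec R S + indicatorVec R T := by
  ext x
  by_cases hS : x ∈ S
  · simp [indicatorVec, hS, disjoint_left.1 h hS]
  · simp [indicatorVec, hS]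

theorem indicatorVec_pair {x y : X} (h : x ≠ y) :
    indicatorVec R {x, y} = Pi.single x 1 + Pi.single y 1 := by
  rw [insert_eq, indicatorVec_union (disjoint_singleton.2 h), indicatorVec_singleton,
    indicatorVec_singleton]

end Indicator

section Zeros

variable [Fintype X] [DecidableEq X] {R : Type*} [CommRing R] [DecidableEq R] (A : Matrix X X R)

theorem four_mul_card_filter_dotProduct_mulVec_eq_zero_le_of_ne {x y : X} (hne : x ≠ y)
    (hB : A x y + A y x ≠ 0) :
    4 * #(univ.filter fun S => indicatorVec R S ⬝ᵥ A *ᵥ indicatorVec R S = 0) ≤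
      3 * 2 ^ Fintype.card X := by
  refine four_mul_card_filter_le {x, y} card_le_two fun T hT => ?_
  by_contra! hzero
  set v := indicatorVec R T
  have hQ : ∀ U ⊆ {x, y}, (v + indicatorVec R U) ⬝ᵥ A *ᵥ (v + indicatorVec R U) = 0 :=
    fun U hU => by
      rw [← indicatorVec_union (hT.mono_right hU)]
      exact hzero U hU
  have h0 := hQ ∅ (empty_subset _)
  have hx := hQ {x} (by simp)
  have hy := hQ {y} (by simp)
  have hxy := hQ {x, y} subset_rfl
  simp only [indicatorVec_empty, add_zero, indicatorVec_singleton, indicatorVec_pair hne,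
    ← add_assoc] at h0 hx hy hxy
  have hsecond := dotProduct_mulVec_add_add A v (Pi.single x 1) (Pi.single y 1)
  rw [h0, hx, hy, hxy, single_one_dotProduct, single_one_dotProduct, mulVec_single_one,
    mulVec_single_one, col_apply, col_apply] at hsecond
  exact hB (by rw [← hsecond]; ring)

theorem four_mul_card_filter_dotProduct_mulVec_eq_zero_le_of_diag {x : X} (hx : A x x ≠ 0)
    (hoff : ∀ u, u ≠ x → A u x + A x u = 0) :
    4 * #(univ.filter fun S => indicatorVec R S ⬝ᵥ A *ᵥ indicatorVec R S = 0) ≤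
      3 * 2 ^ Fintype.card X := by
  refine four_mul_card_filter_le {x} (by simp) fun T hT => ?_
  by_contra! hzero
  have hsum : ∑ u, indicatorVec R T u * (A u x + A x u) = 0 := by
    refine sum_eq_zero fun u _ => ?_
    by_cases hu : u ∈ T
    · rw [hoff u (ne_of_mem_of_not_mem hu (disjoint_singleton_right.1 hT)), mul_zero]
    · simp [indicatorVec, hu]
  have hfirst := dotProduct_mulVec_add_single A (indicatorVec R T) x
  rw [hsum, add_zero, ← indicatorVec_singleton, ← indicatorVec_union hT, hzero {x} subset_rfl,
    ← union_empty T, hzero ∅ (empty_subset _), zero_add] at hfirst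
  exact hx hfirst.symm

theorem four_mul_card_filter_dotProduct_mulVec_eq_zero_le (hA : A + Aᵀ ≠ 0) :
    4 * #(univ.filter fun S => indicatorVec R S ⬝ᵥ A *ᵥ indicatorVec R S = 0) ≤
      3 * 2 ^ Fintype.card X := by
  obtain ⟨x, y, hxy⟩ : ∃ x y, A x y + A y x ≠ 0 := by
    contrapose! hA
    ext x y
    exact hA x y
  by_cases hoff : ∃ x y, x ≠ y ∧ A x y + A y x ≠ 0
  · obtain ⟨x, y, hne, hB⟩ := hoff
    exact four_mul_card_filter_dotProduct_mulVec_eq_zero_le_of_ne A hne hB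
  push Not at hoff
  obtain rfl : x = y := by_contra fun hne => hxy (hoff x y hne)
  refine four_mul_card_filter_dotProduct_mulVec_eq_zero_le_of_diag A (fun hx => ?_)
    fun u hu => hoff u x hu
  exact hxy (by rw [hx, add_zero])

end Zeros

theorem card_inter_image_eq_dotProduct [Fintype X] [DecidableEq X] (f : Perm X) (S : Finset X) :
    (#(S ∩ S.image f) : ℤ) = indicatorVec ℤ S ⬝ᵥ f.permMatrix ℤ *ᵥ indicatorVec ℤ S := by
  rw [permMatrix_mulVec, dotProduct, ← (f.symm).sum_comp]
  simp only [indicatorVec, Function.comp_apply, Equiv.apply_symm_apply, ite_zero_mul_ite_zero,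
    mul_one]
  rw [sum_boole]
  congr 2
  ext v
  simp [and_comm, mem_image, ← Equiv.eq_symm_apply]

theorem eq_and_eq_or_eq_and_eq_of_forall_add_eq [DecidableEq X] {a b c d : X}
    (h : ∀ v : X → ℤ, v a + v b = v c + v d) : a = c ∧ b = d ∨ a = d ∧ b = c := by
  have ha := h (Pi.single a 1)
  have hb := h (Pi.single b 1)
  simp only [Pi.single_apply] at ha hb
  split_ifs at ha hb <;> subst_vars <;> simp_all

theorem apply_eq_and_or_of_permMatrix_add_inv_eq [Fintype X] [DecidableEq X] {f g : Perm X}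
    (h : f.permMatrix ℤ + f⁻¹.permMatrix ℤ = g.permMatrix ℤ + g⁻¹.permMatrix ℤ) (x : X) :
    f x = g x ∧ f⁻¹ x = g⁻¹ x ∨ f x = g⁻¹ x ∧ f⁻¹ x = g x := by
  refine eq_and_eq_or_eq_and_eq_of_forall_add_eq fun v => ?_
  simpa [add_mulVec, permMatrix_mulVec] using congrFun (congrArg (· *ᵥ v) h) x

theorem exists_invariant_eqOn_of_apply_eq_and_or [Fintype X] [DecidableEq X] {f g : Perm X}
    (h : ∀ x, f x = g x ∧ f⁻¹ x = g⁻¹ x ∨ f x = g⁻¹ x ∧ f⁻¹ x = g x) :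
    ∃ I : Finset X, I.image f = I ∧ I.image g = I ∧
      (∀ x ∈ I, f x = g x) ∧ (∀ x ∉ I, f x = g⁻¹ x) := by
  set I := univ.filter fun x => f x = g x
  have hmapsTo : ∀ x ∈ I, f x ∈ I := by
    intro x hx
    replace hx : f x = g x := (mem_filter.1 hx).2
    rw [mem_filter]
    refine ⟨mem_univ _, ?_⟩
    rcases h (f x) with ⟨heq, -⟩ | ⟨hfg, hgf⟩
    · exact heq
    · rw [hfg, ← hgf, Perm.inv_eq_iff_eq.2 hx, Perm.inv_eq_iff_eq.2 rfl]
  have hf : I.image f = I :=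
    eq_of_subset_of_card_le (image_subset_iff.2 hmapsTo) (card_image_of_injective _ f.injective).ge
  refine ⟨I, hf, ?_, fun x hx => (mem_filter.1 hx).2, fun x hx => ?_⟩
  · rwa [← image_congr fun x hx => (mem_filter.1 hx).2]
  · exact ((h x).resolve_left fun hfg => hx (mem_filter.2 ⟨mem_univ _, hfg.1⟩)).1

end

theorem stmt6 {X : Type*} [Fintype X] [DecidableEq X] (f g : Equiv.Perm X) :
    4 * (Finset.univ.filter (fun S : Finset X =>
        (S ∩ S.image f).card = (S ∩ S.image g).card)).card ≤ 3 * 2 ^ Fintype.card X ∨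
    ∃ I : Finset X, I.image f = I ∧ I.image g = I ∧
      (∀ x ∈ I, f x = g x) ∧ (∀ x ∉ I, f x = g⁻¹ x) := by
  by_cases h : f.permMatrix ℤ + f⁻¹.permMatrix ℤ = g.permMatrix ℤ + g⁻¹.permMatrix ℤ
  · exact Or.inr (exists_invariant_eqOn_of_apply_eq_and_or
      (apply_eq_and_or_of_permMatrix_add_inv_eq h))
  left
  set A := f.permMatrix ℤ - g.permMatrix ℤ
  have hA : A + Aᵀ ≠ 0 := by
    rwa [transpose_sub, transpose_permMatrix, transpose_permMatrix, sub_add_sub_comm, Ne,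
      sub_eq_zero]
  have hcard (S : Finset X) :
      #(S ∩ S.image f) = #(S ∩ S.image g) ↔ indicatorVec ℤ S ⬝ᵥ A *ᵥ indicatorVec ℤ S = 0 := by
    rw [sub_mulVec, dotProduct_sub, ← card_inter_image_eq_dotProduct,
      ← card_inter_image_eq_dotProduct, sub_eq_zero, Nat.cast_inj]
  simpa only [hcard] using four_mul_card_filter_dotProduct_mulVec_eq_zero_le A hA
end

section
/- Let X be a finite set and let f, g be permutations of X. Suppose there exists a subset I ⊆ X that is invariant under both f and g, with f|_I = g|_I and f|_{X∖I} = (g^{-1})|_{X∖I}. Then |S ∩ S^f| = |S ∩ S^g| for every subset S ⊆ X. -/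
open Finset

namespace Finset

variable {X : Type*} [DecidableEq X]

/-- `σ` maps `S ∩ σ⁻¹ S` bijectively onto `σ S ∩ S`. -/
theorem card_inter_image_perm_inv (σ : Equiv.Perm X) (S : Finset X) :
    #(S ∩ S.image ⇑σ⁻¹) = #(S ∩ S.image σ) := by
  rw [← card_image_of_injective _ σ.injective, image_inter _ _ σ.injective, image_image,
    ← Equiv.Perm.coe_mul, mul_inv_cancel, Equiv.Perm.coe_one, image_id, inter_comm]

/-- `f` maps `S ∩ I` into `I` and, being injective, `S \ I` into `Iᶜ`. -/
theorem card_inter_image_eq_add_of_image_eq {f : X → X} (hf : Function.Injective f)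
    {I : Finset X} (hI : I.image f = I) (S : Finset X) :
    #(S ∩ S.image f) = #(S ∩ I ∩ (S ∩ I).image f) + #(S \ I ∩ (S \ I).image f) := by
  rw [image_inter _ _ hf, image_sdiff _ _ hf, hI, ← card_sdiff_add_card_inter (S ∩ S.image f) I,
    add_comm]
  congr 2 <;> ext <;> simp only [mem_inter, mem_sdiff] <;> tauto

end Finset

theorem stmt7_general {X : Type*} [DecidableEq X] (f g : Equiv.Perm X)
    (I : Finset X) (hIf : I.image f = I) (hIg : I.image g = I)
    (hfg : ∀ x ∈ I, f x = g x) (hfg' : ∀ x ∉ I, f x = g⁻¹ x) :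
    ∀ S : Finset X, (S ∩ S.image f).card = (S ∩ S.image g).card := by
  intro S
  have h_in : (S ∩ I).image f = (S ∩ I).image g :=
    image_congr fun x hx => hfg x (mem_inter.1 hx).2
  have h_out : (S \ I).image f = (S \ I).image ⇑g⁻¹ :=
    image_congr fun x hx => hfg' x (mem_sdiff.1 hx).2
  rw [card_inter_image_eq_add_of_image_eq f.injective hIf,
    card_inter_image_eq_add_of_image_eq g.injective hIg, h_in, h_out, card_inter_image_perm_inv]

theorem stmt7 {X : Type*} [Fintype X] [DecidableEq X] (f g : Equiv.Perm X)
    (I : Finset X) (hIf : I.image f = I) (hIg : I.image g = I)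
    (hfg : ∀ x ∈ I, f x = g x) (hfg' : ∀ x ∉ I, f x = g⁻¹ x) :
    ∀ S : Finset X, (S ∩ S.image f).card = (S ∩ S.image g).card :=
  stmt7_general f g I hIf hIg hfg hfg'
end

section
/- Let X be a finite set, let A be an X×X integer matrix, and suppose there exist distinct i, j ∈ X with A_{i,j} + A_{j,i} ≠ 0. Then the number of vectors δ ∈ {0,1}^X with δᵀAδ = 0 is at most (3/4)·2^{|X|}. -/
/-!
Flipping coordinate `i` changes the indicator vector `v` of `δ` by `±eᵢ`. By polarization the
second difference of `Q v = vᵀAv` over the square `δ, flipᵢ δ, flipⱼ δ, flipᵢ flipⱼ δ` is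
`±(A i j + A j i) ≠ 0`, so at most three of these four points are zeros of `Q`. Averaging over
the four permutations `1, flipᵢ, flipⱼ, flipᵢ flipⱼ` of `{0,1}^X` bounds four times the number of
zeros by `3 · 2^|X|`.
-/

open Finset Matrix

theorem card_mul_card_filter_add_card_le {α ι : Type*} [Fintype α] [Fintype ι]
    (e : ι → Equiv.Perm α) (p : α → Prop) [DecidablePred p] (h : ∀ a, ∃ k, ¬ p (e k a)) :
    Fintype.card ι * #{a | p a} + Fintype.card α ≤ Fintype.card ι * Fintype.card α := by
  classical
  have hperm (k : ι) : #{a | p a} = #{a | p (e k a)} := by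
    simp only [card_filter]
    exact (Equiv.sum_comp (e k) fun a => if p a then 1 else 0).symm
  have hfew (a : α) : #{k | p (e k a)} + 1 ≤ Fintype.card ι :=
    card_lt_card (filter_ssubset.mpr ((h a).imp fun k hk => ⟨mem_univ k, hk⟩))
  calc Fintype.card ι * #{a | p a} + Fintype.card α
      = ∑ k, #{a | p (e k a)} + Fintype.card α := by simp [← hperm]
    _ = ∑ a, (#{k | p (e k a)} + 1) := by
        simp only [card_filter, sum_add_distrib]
        rw [sum_comm]
        simp
    _ ≤ ∑ _a : α, Fintype.card ι := sum_le_sum fun a _ => hfew a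
    _ = Fintype.card ι * Fintype.card α := by simp [mul_comm]

section Polarization

variable {R X : Type*} [Fintype X]

theorem second_difference_dotProduct_mulVec [NonUnitalNonAssocRing R] (A : Matrix X X R)
    (v a b : X → R) :
    (v + a + b) ⬝ᵥ A *ᵥ (v + a + b) - (v + a) ⬝ᵥ A *ᵥ (v + a) - (v + b) ⬝ᵥ A *ᵥ (v + b)
      + v ⬝ᵥ A *ᵥ v = a ⬝ᵥ A *ᵥ b + b ⬝ᵥ A *ᵥ a := by
  simp only [mulVec_add, add_dotProduct, dotProduct_add]
  abel

theorem single_dotProduct_mulVec_single [NonUnitalSemiring R] [DecidableEq X]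
    (A : Matrix X X R) (i j : X) (s t : R) :
    Pi.single i s ⬝ᵥ A *ᵥ Pi.single j t = s * A i j * t := by
  rw [mulVec_single, single_dotProduct, mul_assoc]
  rfl

end Polarization

section BoolVectors

variable {X : Type*}

def boolVec (δ : X → Bool) : X → ℤ := fun x => if δ x then 1 else 0

theorem boolVec_dotProduct_mulVec_boolVec [Fintype X] (A : Matrix X X ℤ) (δ : X → Bool) :
    boolVec δ ⬝ᵥ A *ᵥ boolVec δ
      = ∑ x, ∑ y, (if δ x then (1 : ℤ) else 0) * A x y * (if δ y then (1 : ℤ) else 0) := by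
  simp only [dotProduct, mulVec, boolVec, mul_sum, mul_assoc]

variable [DecidableEq X]

def flipAt (i : X) : Equiv.Perm (X → Bool) :=
  Function.Involutive.toPerm (fun δ => Function.update δ i (!δ i)) fun δ => by simp

theorem flipAt_apply (i : X) (δ : X → Bool) : flipAt i δ = Function.update δ i (!δ i) := rfl

theorem boolVec_flipAt (δ : X → Bool) (i : X) :
    boolVec (flipAt i δ) = boolVec δ + Pi.single i (if δ i then -1 else 1) := by
  funext x
  rcases eq_or_ne x i with rfl | hx
  · cases h : δ x <;> simp [boolVec, flipAt_apply, h]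
  · simp [boolVec, flipAt_apply, hx]

theorem boolVec_flipAt_flipAt {i j : X} (hij : i ≠ j) (δ : X → Bool) :
    boolVec (flipAt i (flipAt j δ)) = boolVec δ + Pi.single i (if δ i then -1 else 1)
      + Pi.single j (if δ j then -1 else 1) := by
  rw [boolVec_flipAt, boolVec_flipAt, flipAt_apply, Function.update_of_ne hij, add_right_comm]

theorem second_difference_boolVec_flipAt [Fintype X] (A : Matrix X X ℤ) {i j : X} (hij : i ≠ j)
    (δ : X → Bool) :
    boolVec (flipAt i (flipAt j δ)) ⬝ᵥ A *ᵥ boolVec (flipAt i (flipAt j δ))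
      - boolVec (flipAt i δ) ⬝ᵥ A *ᵥ boolVec (flipAt i δ)
      - boolVec (flipAt j δ) ⬝ᵥ A *ᵥ boolVec (flipAt j δ) + boolVec δ ⬝ᵥ A *ᵥ boolVec δ
      = (if δ i then -1 else 1) * (if δ j then -1 else 1) * (A i j + A j i) := by
  rw [boolVec_flipAt_flipAt hij, boolVec_flipAt, boolVec_flipAt,
    second_difference_dotProduct_mulVec, single_dotProduct_mulVec_single,
    single_dotProduct_mulVec_single]
  ring

end BoolVectors

theorem stmt8 {X : Type*} [Fintype X] [DecidableEq X] (A : X → X → ℤ)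
    (i j : X) (hij : i ≠ j) (hA : A i j + A j i ≠ 0) :
    4 * (Finset.univ.filter (fun δ : X → Bool =>
        (∑ x : X, ∑ y : X,
          (if δ x then (1 : ℤ) else 0) * A x y * (if δ y then (1 : ℤ) else 0)) = 0)).card
      ≤ 3 * 2 ^ Fintype.card X := by
  simp only [← boolVec_dotProduct_mulVec_boolVec A]
  set Q : (X → Bool) → ℤ := fun δ => boolVec δ ⬝ᵥ A *ᵥ boolVec δ
  let flips (k : Bool × Bool) : Equiv.Perm (X → Bool) :=
    (if k.1 then flipAt i else 1) * (if k.2 then flipAt j else 1)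
  have hsquare (δ : X → Bool) : ∃ k, ¬ Q (flips k δ) = 0 := by
    by_contra! hzero
    have hsign (b : Bool) : (if b then -1 else 1 : ℤ) ≠ 0 := by cases b <;> decide
    refine mul_ne_zero (mul_ne_zero (hsign (δ i)) (hsign (δ j))) hA ?_
    rw [← second_difference_boolVec_flipAt A hij δ]
    simpa [flips] using congr($(hzero (true, true)) - $(hzero (true, false))
      - $(hzero (false, true)) + $(hzero (false, false)))
  have := card_mul_card_filter_add_card_le flips (Q · = 0) hsquare
  simp only [Fintype.card_prod, Fintype.card_bool, Fintype.card_fun, Q] at this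
  omega
end

section
/- Let R be a finite group, N a normal subgroup of R, and suppose R/N is an elementary abelian 2-group. Let f be a permutation of R fixing the identity, normalizing N (in Sym(R), conjugation by f preserves the regular copy of N), and fixing each coset of N setwise. If f commutes with the right regular action of a subgroup K of index 2 in R containing N, and f has odd prime order p, then every nontrivial cycle of f on R∖K has length p and f is determined by the image of a single element x ∈ R∖K, which must be of the form xk with k ∈ N of order p. -/
/-!
Write `x^f = x k`. Since `f` commutes with right multiplication by `K ∋ k`, iterating gives
`x^(f^n) = x kⁿ`, so the `f`-orbit of `x` is `x` times the cyclic group `⟨k⟩`, and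
`minimalPeriod f x = orderOf k`. As `f^p = 1` we get `k^p = 1`; and `k ≠ 1`, for otherwise
`f` would fix `1` and `x`, hence fix both cosets `K` and `xK` pointwise, i.e. `f = 1`.
-/

open Function

namespace Equiv.Perm

variable {R : Type*} [Group R] {K : Subgroup R} {f : Equiv.Perm R}

theorem iterate_apply_eq_mul_pow (hcent : ∀ x : R, ∀ k ∈ K, f (x * k) = f x * k) {x : R}
    (hk : x⁻¹ * f x ∈ K) (n : ℕ) : f^[n] x = x * (x⁻¹ * f x) ^ n := by
  induction n with
  | zero => simp
  | succ n ih =>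
    rw [iterate_succ_apply', ih, hcent x _ (pow_mem hk n), pow_succ', ← mul_assoc,
      mul_inv_cancel_left]

theorem minimalPeriod_eq_orderOf_inv_mul (hcent : ∀ x : R, ∀ k ∈ K, f (x * k) = f x * k)
    {x : R} (hk : x⁻¹ * f x ∈ K) : minimalPeriod f x = orderOf (x⁻¹ * f x) := by
  rw [orderOf, minimalPeriod_eq_minimalPeriod_iff]
  intro n
  rw [isPeriodicPt_mul_iff_pow_eq_one, IsPeriodicPt, IsFixedPt,
    iterate_apply_eq_mul_pow hcent hk, mul_eq_left]

theorem eq_one_of_index_eq_two (hK : K.index = 2)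
    (hcent : ∀ x : R, ∀ k ∈ K, f (x * k) = f x * k) (hf1 : f 1 = 1) {x : R} (hx : x ∉ K)
    (hfx : f x = x) : f = 1 := by
  ext y
  by_cases hy : y ∈ K
  · simpa [hf1] using hcent 1 y hy
  · have hxy : x⁻¹ * y ∈ K := by
      rw [Subgroup.mul_mem_iff_of_index_two hK, Subgroup.inv_mem_iff]
      exact iff_of_false hx hy
    simpa [hfx] using hcent x _ hxy

end Equiv.Perm

open Equiv.Perm in
theorem stmt14_general {R : Type*} [Group R]
    (N K : Subgroup R) (hNK : N ≤ K) (hK : K.index = 2)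
    (f : Equiv.Perm R) (hf1 : f 1 = 1)
    (hcoset : ∀ x : R, x⁻¹ * f x ∈ N)
    (hcent : ∀ x : R, ∀ k ∈ K, f (x * k) = f x * k)
    (p : ℕ) (hp : p.Prime) (hord : orderOf f = p) :
    ∀ x : R, x ∉ K → ∃ k : R, k ∈ N ∧ orderOf k = p ∧
      (∀ k' ∈ K, f (x * k') = x * k * k') ∧
      Function.minimalPeriod (⇑f) x = p := by
  intro x hx
  have hkK : x⁻¹ * f x ∈ K := hNK (hcoset x)
  have hpow : (x⁻¹ * f x) ^ p = 1 := by
    have hfix : f^[p] x = x := by rw [iterate_eq_pow, ← hord, pow_orderOf_eq_one]; rfl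
    rwa [iterate_apply_eq_mul_pow hcent hkK, mul_eq_left] at hfix
  have hne : x⁻¹ * f x ≠ 1 := by
    intro h1
    have hfx : f x = x := by rwa [inv_mul_eq_one, eq_comm] at h1
    have hf : f = 1 := eq_one_of_index_eq_two hK hcent hf1 hx hfx
    exact hp.one_lt.ne' (by rw [← hord, hf, orderOf_one])
  have : Fact p.Prime := ⟨hp⟩
  have hordk : orderOf (x⁻¹ * f x) = p := orderOf_eq_prime hpow hne
  refine ⟨x⁻¹ * f x, hcoset x, hordk, fun k' hk' => ?_, ?_⟩
  · rw [hcent x k' hk', mul_inv_cancel_left]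
  · rw [minimalPeriod_eq_orderOf_inv_mul hcent hkK, hordk]

theorem stmt14 {R : Type*} [Group R] [Fintype R] [DecidableEq R]
    (N K : Subgroup R) [N.Normal] (hNK : N ≤ K) (hK : K.index = 2)
    (helem : ∀ x : R, x ^ 2 ∈ N)
    (f : Equiv.Perm R) (hf1 : f 1 = 1)
    (hnorm : ∀ n ∈ N, ∃ m ∈ N, ∀ x : R, f (f.symm x * n) = x * m)
    (hcoset : ∀ x : R, x⁻¹ * f x ∈ N)
    (hcent : ∀ x : R, ∀ k ∈ K, f (x * k) = f x * k)
    (p : ℕ) (hp : p.Prime) (hodd : Odd p) (hord : orderOf f = p) :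
    ∀ x : R, x ∉ K → ∃ k : R, k ∈ N ∧ orderOf k = p ∧
      (∀ k' ∈ K, f (x * k') = x * k * k') ∧
      Function.minimalPeriod (⇑f) x = p :=
  stmt14_general N K hNK hK f hf1 hcoset hcent p hp hord
end

section
/- Let T be a finite group, N a subgroup of index 2, γ ∈ T∖N, and t ∈ N with o(t) ≥ 3. Let α : T → T be a permutation with α(N) = N and α(γn) = γtn for all n ∈ N. Then the number of subsets X ⊆ T that are inverse-closed (X = X^{-1}) and α-invariant (X^α = X) is at most 2^{c(T) − |N|/6}, where c(T) = (|T| + |I(T)|)/2 and I(T) is the set of elements of T of order at most 2. -/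
open Finset
open scoped Pointwise

/-!
Pick one representative in every cycle of inversion on `N` and in every cycle of `α` on `γN`. An
inverse-closed `α`-invariant set is determined by which representatives it contains, since membership
is constant along cycles. Inversion has at most `(|N| + |I(T)|)/2` cycles on `N`, and `α` acts on `γN`
as `γn ↦ (γtγ⁻¹)γn`, so its cycles there have length `o(t) ≥ 3` and number at most `|N|/3`.
-/

theorem Finset.card_le_two_pow_of_forall_exists_mem_iff {α : Type*} [DecidableEq α]
    {F : Finset (Finset α)} {R : Finset α} (h : ∀ x, ∃ r ∈ R, ∀ X ∈ F, r ∈ X ↔ x ∈ X) :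
    #F ≤ 2 ^ #R := by
  calc #F ≤ #R.powerset := by
        refine card_le_card_of_injOn (· ∩ R) (fun X _ => by simp) fun X hX Y hY hXY => ?_
        ext x
        obtain ⟨r, hr, hrx⟩ := h x
        rw [← hrx X hX, ← hrx Y hY]
        simpa [hr] using congrArg (r ∈ ·) hXY
    _ = 2 ^ #R := card_powerset R

namespace Equiv.Perm

variable {α : Type*} {σ : Perm α}

noncomputable def cycleRep (σ : Perm α) (x : α) : α :=
  (Quotient.mk (SameCycle.setoid σ) x).out

theorem sameCycle_cycleRep (σ : Perm α) (x : α) : σ.SameCycle (σ.cycleRep x) x :=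
  Quotient.mk_out (s := SameCycle.setoid σ) x

theorem SameCycle.cycleRep_eq {x y : α} (h : σ.SameCycle x y) : σ.cycleRep x = σ.cycleRep y :=
  congrArg Quotient.out (Quotient.sound (s := SameCycle.setoid σ) h)

theorem SameCycle.mem_iff {X : Finset α} (hX : ∀ z, σ z ∈ X ↔ z ∈ X) {x y : α}
    (h : σ.SameCycle x y) : x ∈ X ↔ y ∈ X := by
  obtain ⟨i, rfl⟩ := h
  induction i using Int.induction_on with
  | zero => simp
  | succ i ih => rw [ih, add_comm, zpow_add, zpow_one, mul_apply, hX]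
  | pred i ih =>
    have : σ ^ (-(i : ℤ)) = σ * σ ^ (-(i : ℤ) - 1) := by rw [← zpow_one_add]; ring_nf
    rw [ih, this, mul_apply, hX]

theorem mul_card_image_cycleRep_le [DecidableEq α] (σ : Perm α) (s : Finset α) (k : ℕ)
    (hk : ∀ x ∈ s, ∃ c ⊆ s, k ≤ #c ∧ ∀ y ∈ c, σ.SameCycle x y) :
    k * #(s.image σ.cycleRep) ≤ #s := by
  rw [card_eq_sum_card_image σ.cycleRep s, mul_comm, ← smul_eq_mul]
  refine card_nsmul_le_sum _ _ _ fun r hr => ?_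
  obtain ⟨x, hx, rfl⟩ := mem_image.1 hr
  obtain ⟨c, hcs, hkc, hc⟩ := hk x hx
  exact hkc.trans <| card_le_card fun y hy => mem_filter.2 ⟨hcs hy, (hc y hy).cycleRep_eq.symm⟩

end Equiv.Perm

open Equiv.Perm

theorem two_mul_card_image_inv_cycleRep_le {G : Type*} [Group G] [DecidableEq G]
    (s : Finset G) (hs : ∀ x ∈ s, x⁻¹ ∈ s) :
    2 * #(s.image (Equiv.inv G).cycleRep) ≤ #s + #{x ∈ s | x ^ 2 = 1} := by
  set I := {x ∈ s | x ^ 2 = 1}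
  set J := {x ∈ s | ¬x ^ 2 = 1}
  have hJ : 2 * #(J.image (Equiv.inv G).cycleRep) ≤ #J := by
    refine mul_card_image_cycleRep_le _ _ _ fun x hx => ⟨{x, x⁻¹}, ?_, ?_, ?_⟩
    · obtain ⟨hxs, hx2⟩ := mem_filter.1 hx
      simp [insert_subset_iff, J, hxs, hs x hxs, hx2, inv_pow]
    · rw [card_pair fun h => (mem_filter.1 hx).2 (by rwa [sq, ← eq_inv_iff_mul_eq_one])]
    · simp only [mem_insert, mem_singleton]
      rintro y (rfl | rfl)
      · exact SameCycle.refl _ _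
      · exact ⟨1, by simp⟩
  have hsub : s.image (Equiv.inv G).cycleRep ⊆
      I.image (Equiv.inv G).cycleRep ∪ J.image (Equiv.inv G).cycleRep := by
    rw [← image_union, filter_union_filter_not_eq]
  have hIJ : #I + #J = #s := card_filter_add_card_filter_not _
  have hI : #(I.image (Equiv.inv G).cycleRep) ≤ #I := card_image_le
  have := (card_le_card hsub).trans (card_union_le _ _)
  omega

theorem card_filter_inv_eq_image_eq_le {G : Type*} [Group G] [Fintype G] [DecidableEq G]
    (α : Equiv.Perm G) (s s' : Finset G) (hss' : ∀ x, x ∈ s ∨ x ∈ s') :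
    #{X : Finset G | X⁻¹ = X ∧ X.image α = X} ≤
      2 ^ (#(s.image (Equiv.inv G).cycleRep) + #(s'.image α.cycleRep)) := by
  refine (card_le_two_pow_of_forall_exists_mem_iff fun x => ?_).trans
    (Nat.pow_le_pow_right two_pos (card_union_le _ _))
  rcases hss' x with hx | hx
  · refine ⟨_, mem_union_left _ (mem_image_of_mem _ hx), fun X hX => ?_⟩
    refine SameCycle.mem_iff (fun z => ?_) (sameCycle_cycleRep _ x)
    rw [Equiv.inv_apply, ← mem_inv', (mem_filter.1 hX).2.1]
  · refine ⟨_, mem_union_right _ (mem_image_of_mem _ hx), fun X hX => ?_⟩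
    refine SameCycle.mem_iff (fun z => ?_) (sameCycle_cycleRep _ x)
    nth_rw 1 [← (mem_filter.1 hX).2.2]
    exact α.injective.mem_finset_image

theorem natCast_le_two_rpow {n k : ℕ} {e : ℝ} (hn : n ≤ 2 ^ k) (hk : (k : ℝ) ≤ e) :
    (n : ℝ) ≤ 2 ^ e :=
  calc (n : ℝ) ≤ (2 : ℝ) ^ (k : ℝ) := by rw [Real.rpow_natCast]; exact_mod_cast hn
    _ ≤ 2 ^ e := Real.rpow_le_rpow_of_exponent_le one_le_two hk

section IndexTwo

variable {T : Type*} [Group T] {N : Subgroup T} {γ t : T} {α : Equiv.Perm T}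

theorem Subgroup.inv_mul_mem_of_index_two (hN : N.index = 2) {a b : T} (ha : a ∉ N)
    (hb : b ∉ N) : a⁻¹ * b ∈ N :=
  (mul_mem_iff_of_index_two hN).2 (iff_of_false (by rwa [N.inv_mem_iff]) hb)

theorem conj_pow_mul_notMem (hN : N.index = 2) (hγ : γ ∉ N) (ht : t ∈ N) {x : T}
    (hx : x ∉ N) (i : ℕ) : γ * t ^ i * γ⁻¹ * x ∉ N := by
  have hγx := Subgroup.inv_mul_mem_of_index_two hN hγ hx
  rwa [show γ * t ^ i * γ⁻¹ * x = γ * (t ^ i * (γ⁻¹ * x)) by group,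
    N.mul_mem_cancel_right (N.mul_mem (N.pow_mem ht i) hγx)]

theorem pow_apply_of_notMem (hN : N.index = 2) (hγ : γ ∉ N) (ht : t ∈ N)
    (hαγ : ∀ n ∈ N, α (γ * n) = γ * t * n) {x : T} (hx : x ∉ N) (i : ℕ) :
    (α ^ i) x = γ * t ^ i * γ⁻¹ * x := by
  induction i generalizing x with
  | zero => simp
  | succ i ih =>
    have hγx := Subgroup.inv_mul_mem_of_index_two hN hγ hx
    have hαx : α x = γ * t ^ 1 * γ⁻¹ * x := by
      rw [show x = γ * (γ⁻¹ * x) by group, hαγ _ hγx]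
      group
    rw [pow_succ, mul_apply, hαx, ih (conj_pow_mul_notMem hN hγ ht hx 1)]
    group

theorem orderOf_mul_card_image_cycleRep_le [Fintype T] [DecidableEq T] [DecidablePred (· ∈ N)]
    (hN : N.index = 2) (hγ : γ ∉ N) (ht : t ∈ N) (hαγ : ∀ n ∈ N, α (γ * n) = γ * t * n) :
    orderOf t * #(({x | x ∉ N} : Finset T).image α.cycleRep) ≤ #({x | x ∉ N} : Finset T) := by
  refine mul_card_image_cycleRep_le _ _ _ fun x hx => ?_
  have hxN : x ∉ N := (mem_filter.1 hx).2
  refine ⟨(range (orderOf t)).image fun i => (α ^ i) x, ?_, ?_, ?_⟩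
  · intro y hy
    obtain ⟨i, -, rfl⟩ := mem_image.1 hy
    simpa [pow_apply_of_notMem hN hγ ht hαγ hxN] using conj_pow_mul_notMem hN hγ ht hxN i
  · rw [card_image_of_injOn, card_range]
    intro i hi j hj hij
    apply pow_injOn_Iio_orderOf (by simpa using hi) (by simpa using hj)
    simpa [pow_apply_of_notMem hN hγ ht hαγ hxN] using hij
  · intro y hy
    obtain ⟨i, -, rfl⟩ := mem_image.1 hy
    exact sameCycle_pow_right.2 (SameCycle.refl _ _)

end IndexTwo

theorem stmt18_general {T : Type*} [Group T] [Fintype T] [DecidableEq T]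
    (N : Subgroup T) (hN : N.index = 2) (γ : T) (hγ : γ ∉ N)
    (t : T) (ht : t ∈ N) (hto : 3 ≤ orderOf t)
    (α : Equiv.Perm T)
    (hαγ : ∀ n ∈ N, α (γ * n) = γ * t * n) :
    ((Finset.univ.filter (fun X : Finset T =>
        X⁻¹ = X ∧ X.image α = X)).card : ℝ) ≤
      2 ^ (((Fintype.card T : ℝ) +
            ((Finset.univ.filter (fun x : T => x ^ 2 = 1)).card : ℝ)) / 2
           - (Nat.card N : ℝ) / 6) := by
  classical
  set sN : Finset T := {x | x ∈ N}
  set sΓ : Finset T := {x | x ∉ N}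
  have hF := card_filter_inv_eq_image_eq_le α sN sΓ fun x => by
    by_cases hx : x ∈ N <;> simp [sN, sΓ, hx]
  have hRN := two_mul_card_image_inv_cycleRep_le sN (by simp [sN])
  have hRΓ : 3 * #(sΓ.image α.cycleRep) ≤ #sΓ :=
    (Nat.mul_le_mul_right _ hto).trans (orderOf_mul_card_image_cycleRep_le hN hγ ht hαγ)
  have hI : #{x ∈ sN | x ^ 2 = 1} ≤ #{x : T | x ^ 2 = 1} :=
    card_le_card (filter_subset_filter _ (subset_univ _))
  have hcardN : #sN = Nat.card N := by rw [Nat.card_eq_fintype_card, Fintype.card_subtype]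
  have hcardT : Fintype.card T = 2 * Nat.card N := by
    rw [← Nat.card_eq_fintype_card, ← N.index_mul_card, hN]
  have hsplit : #sN + #sΓ = Fintype.card T := card_filter_add_card_filter_not _
  have hexp : 6 * (#(sN.image (Equiv.inv T).cycleRep) + #(sΓ.image α.cycleRep)) ≤
      5 * Nat.card N + 3 * #{x : T | x ^ 2 = 1} := by omega
  refine natCast_le_two_rpow hF ?_
  rw [hcardT]
  have := (Nat.cast_le (α := ℝ)).2 hexp
  push_cast at this ⊢
  linarith

theorem stmt18 {T : Type*} [Group T] [Fintype T] [DecidableEq T]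
    (N : Subgroup T) (hN : N.index = 2) (γ : T) (hγ : γ ∉ N)
    (t : T) (ht : t ∈ N) (hto : 3 ≤ orderOf t)
    (α : Equiv.Perm T)
    (hαN : ∀ x ∈ N, α x ∈ N)
    (hαγ : ∀ n ∈ N, α (γ * n) = γ * t * n) :
    ((Finset.univ.filter (fun X : Finset T =>
        X⁻¹ = X ∧ X.image α = X)).card : ℝ) ≤
      2 ^ (((Fintype.card T : ℝ) +
            ((Finset.univ.filter (fun x : T => x ^ 2 = 1)).card : ℝ)) / 2
           - (Nat.card N : ℝ) / 6) :=
  stmt18_general N hN γ hγ t ht hto α hαγ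
end
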